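/- Suppose d ≥ 1, let D_1 be the largest submodule of M with dim_R(D_1) < d, and let x ∈ m be a parameter element of M (i.e., dim_R(M/xM) = d − 1) such that x ∈ Ann_R(D_1). Then D_1 = (0 :_M x) = (0 :_M x^2) and D_1 ∩ xM = 0. -/

import Mathlib

open CategoryTheory

noncomputable section

/-- The `i`-th local cohomology module of `M` with respect to the ideal `I`,
as an object of `ModuleCat R`. -/
noncomputable def locH (R : Type) [CommRing R] (I : Ideal R) (i : ℕ)
    (M : Type) [AddCommGroup M] [Module R M] : ModuleCat R :=
  (localCohomology I i).obj (ModuleCat.of R M)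

/-- The Krull dimension of the `R`-module `M`, i.e. the Krull dimension of `R / Ann_R M`. -/
noncomputable def mdim (R : Type) [CommRing R]
    (M : Type) [AddCommGroup M] [Module R M] : WithBot ℕ∞ :=
  ringKrullDim (R ⧸ Module.annihilator R M)

/-- `M` is a `p`-secondary module: `M ≠ 0`, every `r ∈ p` acts nilpotently on `M`,
and every `r ∉ p` acts surjectively on `M`. -/
def IsSecondaryFor (R : Type) [CommRing R]
    (M : Type) [AddCommGroup M] [Module R M] (p : Ideal R) : Prop :=
  (∃ x : M, x ≠ 0) ∧
    (∀ r ∈ p, ∃ n : ℕ, ∀ x : M, r ^ n • x = 0) ∧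
    (∀ r : R, r ∉ p → Function.Surjective (fun x : M => r • x))

/-- The set of attached primes of `M` (in the sense of Macdonald): the primes `p` such that
`M` has a `p`-secondary quotient.  For representable (e.g. Artinian) modules this agrees with
the set of primes appearing in a minimal secondary representation. -/
def attachedPrimes (R : Type) [CommRing R]
    (M : Type) [AddCommGroup M] [Module R M] : Set (Ideal R) :=
  { p | p.IsPrime ∧ ∃ N : Submodule R M, IsSecondaryFor R (M ⧸ N) p }

/-- `x ∈ m` is an `M`-sequential element: `x` avoids every attached prime of
`H^j_m(M)` for `1 ≤ j ≤ dim M`. -/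
def IsSequentialElem (R : Type) [CommRing R] (m : Ideal R)
    (M : Type) [AddCommGroup M] [Module R M] (x : R) : Prop :=
  x ∈ m ∧ ∀ j : ℕ, 1 ≤ j → ((j : ℕ∞) : WithBot ℕ∞) ≤ mdim R M →
    ∀ p ∈ attachedPrimes R ↥(locH R m j M), x ∉ p

/-- `x ∈ m` is an `M`-sequential f-element: `x` avoids every attached prime of
`H^j_m(M)`, other than `m` itself, for `2 ≤ j ≤ dim M`. -/
def IsSequentialFElem (R : Type) [CommRing R] (m : Ideal R)
    (M : Type) [AddCommGroup M] [Module R M] (x : R) : Prop :=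
  x ∈ m ∧ ∀ j : ℕ, 2 ≤ j → ((j : ℕ∞) : WithBot ℕ∞) ≤ mdim R M →
    ∀ p ∈ attachedPrimes R ↥(locH R m j M), p ≠ m → x ∉ p

/-- A sequence `x 0, ..., x (t-1)` of elements of `m` is an `M`-sequential sequence if each
`x i` is an `M/(x 0, ..., x (i-1))M`-sequential element. -/
def IsSequentialSeq (R : Type) [CommRing R] (m : Ideal R)
    (M : Type) [AddCommGroup M] [Module R M] {t : ℕ} (x : Fin t → R) : Prop :=
  ∀ i : Fin t,
    IsSequentialElem R m
      (M ⧸ (Ideal.span (x '' {j | j < i}) • (⊤ : Submodule R M))) (x i)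

/-- A sequence `x 0, ..., x (t-1)` of elements of `m` is an `M`-sequential f-sequence if each
`x i` is an `M/(x 0, ..., x (i-1))M`-sequential f-element. -/
def IsSequentialFSeq (R : Type) [CommRing R] (m : Ideal R)
    (M : Type) [AddCommGroup M] [Module R M] {t : ℕ} (x : Fin t → R) : Prop :=
  ∀ i : Fin t,
    IsSequentialFElem R m
      (M ⧸ (Ideal.span (x '' {j | j < i}) • (⊤ : Submodule R M))) (x i)

/-- A filter regular sequence of `M`: a sequence of elements of `m` such that each `x i`
avoids every associated prime `p` of `M/(x 0, ..., x (i-1))M` with `dim R/p > 0`. -/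
def IsFilterRegularSeq (R : Type) [CommRing R] (m : Ideal R)
    (M : Type) [AddCommGroup M] [Module R M] {t : ℕ} (x : Fin t → R) : Prop :=
  (∀ i, x i ∈ m) ∧
    ∀ i : Fin t,
      ∀ p ∈ associatedPrimes R
        (M ⧸ (Ideal.span (x '' {j | j < i}) • (⊤ : Submodule R M))),
        0 < ringKrullDim (R ⧸ p) → x i ∉ p

/-- A generalized regular sequence of `M`: a sequence of elements of `m` such that each `x i`
avoids every associated prime `p` of `M/(x 0, ..., x (i-1))M` with `dim R/p > 1`. -/
def IsGenRegularSeq (R : Type) [CommRing R] (m : Ideal R)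
    (M : Type) [AddCommGroup M] [Module R M] {t : ℕ} (x : Fin t → R) : Prop :=
  (∀ i, x i ∈ m) ∧
    ∀ i : Fin t,
      ∀ p ∈ associatedPrimes R
        (M ⧸ (Ideal.span (x '' {j | j < i}) • (⊤ : Submodule R M))),
        1 < ringKrullDim (R ⧸ p) → x i ∉ p

/-- A system of parameters of `M`: `d = dim M` elements of `m` such that
`M/(x 0, ..., x (d-1))M` has finite length. -/
def IsSOP (R : Type) [CommRing R] (m : Ideal R)
    (M : Type) [AddCommGroup M] [Module R M] {d : ℕ} (x : Fin d → R) : Prop :=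
  mdim R M = ((d : ℕ∞) : WithBot ℕ∞) ∧ (∀ i, x i ∈ m) ∧
    IsFiniteLength R (M ⧸ (Ideal.span (Set.range x) • (⊤ : Submodule R M)))

/-- `M` is a Cohen-Macaulay module (w.r.t. the maximal ideal `m`):
`H^i_m(M) = 0` for all `i < dim M`. -/
def IsCohenMacaulayMod (R : Type) [CommRing R] (m : Ideal R)
    (M : Type) [AddCommGroup M] [Module R M] : Prop :=
  ∀ i : ℕ, ((i : ℕ∞) : WithBot ℕ∞) < mdim R M → Subsingleton ↥(locH R m i M)

/-- `M` is a generalized Cohen-Macaulay module (w.r.t. the maximal ideal `m`):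
`H^i_m(M)` has finite length for all `i < dim M`. -/
def IsGenCohenMacaulayMod (R : Type) [CommRing R] (m : Ideal R)
    (M : Type) [AddCommGroup M] [Module R M] : Prop :=
  ∀ i : ℕ, ((i : ℕ∞) : WithBot ℕ∞) < mdim R M → IsFiniteLength R ↥(locH R m i M)

/-- The submodule of elements of `M` annihilated by the ideal `I`. -/
def annIn (R : Type) [CommRing R] (I : Ideal R)
    (M : Type) [AddCommGroup M] [Module R M] : Submodule R M where
  carrier := {x | ∀ r ∈ I, r • x = 0}
  add_mem' := fun {a b} ha hb r hr => by rw [smul_add, ha r hr, hb r hr, add_zero]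
  zero_mem' := fun r _ => smul_zero r
  smul_mem' := fun c x hx r hr => by rw [smul_comm, hx r hr, smul_zero]

/-- The `m`-power torsion submodule of `M`; this is `H^0_m(M)` as a submodule of `M`. -/
def powerTorsion (R : Type) [CommRing R] (m : Ideal R)
    (M : Type) [AddCommGroup M] [Module R M] : Submodule R M :=
  ⨆ n : ℕ, annIn R (m ^ n) M

/-- The quotient of the submodule `N` by the submodule `P` (intended for `P ≤ N`). -/
abbrev subQuot (R : Type) [CommRing R] {M : Type} [AddCommGroup M] [Module R M]
    (N P : Submodule R M) : Type :=
  N ⧸ (P.comap N.subtype)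

/-- `D 0 = M ⊃ D 1 ⊃ ... ⊃ D t = H^0_m(M)` is the dimension filtration of `M`:
for `1 ≤ i ≤ t`, `D i` is the largest submodule of `M` of dimension `< dim (D (i-1))`. -/
def IsDimFiltration (R : Type) [CommRing R] (m : Ideal R)
    (M : Type) [AddCommGroup M] [Module R M] (t : ℕ) (D : ℕ → Submodule R M) : Prop :=
  D 0 = ⊤ ∧ D t = powerTorsion R m M ∧
    ∀ i : ℕ, 1 ≤ i → i ≤ t →
      mdim R ↥(D i) < mdim R ↥(D (i - 1)) ∧
        ∀ N : Submodule R M, mdim R ↥N < mdim R ↥(D (i - 1)) → N ≤ D i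

/-- `M` is sequentially Cohen-Macaulay: every quotient `D (i-1) / D i` of the dimension
filtration of `M` is Cohen-Macaulay. -/
def IsSeqCM (R : Type) [CommRing R] (m : Ideal R)
    (M : Type) [AddCommGroup M] [Module R M] : Prop :=
  ∃ (t : ℕ) (D : ℕ → Submodule R M), IsDimFiltration R m M t D ∧
    ∀ i : ℕ, 1 ≤ i → i ≤ t → IsCohenMacaulayMod R m (subQuot R (D (i - 1)) (D i))

/-- `M` is sequentially generalized Cohen-Macaulay: every quotient `D (i-1) / D i` of the
dimension filtration of `M` is generalized Cohen-Macaulay. -/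
def IsSeqGCM (R : Type) [CommRing R] (m : Ideal R)
    (M : Type) [AddCommGroup M] [Module R M] : Prop :=
  ∃ (t : ℕ) (D : ℕ → Submodule R M), IsDimFiltration R m M t D ∧
    ∀ i : ℕ, 1 ≤ i → i ≤ t → IsGenCohenMacaulayMod R m (subQuot R (D (i - 1)) (D i))

/-- `M` is unmixed: `dim (R̂ / P) = dim M` for every associated prime `P` of the `m`-adic
completion of `M` over the `m`-adic completion of `R`. -/
def IsUnmixedMod (R : Type) [CommRing R] (m : Ideal R)
    (M : Type) [AddCommGroup M] [Module R M] : Prop :=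
  ∀ P ∈ associatedPrimes (AdicCompletion m R) (AdicCompletion m M),
    ringKrullDim (AdicCompletion m R ⧸ P) = mdim R M

/-- A Noetherian local ring `S` is Cohen-Macaulay if it is Cohen-Macaulay as a module
over itself. -/
def IsCMLocalRing (S : Type) [CommRing S] [IsLocalRing S] : Prop :=
  IsCohenMacaulayMod S (IsLocalRing.maximalIdeal S) S

/-- `A` is a quotient of a Cohen-Macaulay Noetherian local ring by a proper ideal. -/
def IsQuotientOfCMLocalRing (A : Type) [CommRing A] : Prop :=
  ∃ (S : Type) (_ : CommRing S) (_ : IsNoetherianRing S) (_ : IsLocalRing S),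
    IsCMLocalRing S ∧ ∃ f : S →+* A, Function.Surjective f ∧ RingHom.ker f ≠ ⊤

end

/-!
Since `x²` kills `T = (0 :_M x²)`, every prime containing `Ann T` contains both `Ann M` and `x`,
hence lies in `Supp (M / xM)`; so `dim T ≤ dim (M / xM) = d - 1 < d` and `T ⊆ D₁`. The chain
`T ⊆ D₁ ⊆ (0 :_M x) ⊆ T` then collapses, and an element `x m` of `D₁ ∩ xM` has
`m ∈ T = (0 :_M x)`, so `x m = 0`.
-/

open PrimeSpectrum Pointwise

section Dimension

variable {R : Type} [CommRing R]

theorem mdim_eq_krullDim_zeroLocus (M : Type) [AddCommGroup M] [Module R M] :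
    mdim R M = Order.krullDim (zeroLocus (Module.annihilator R M : Set R)) :=
  ringKrullDim_quotient _

theorem mdim_le_of_zeroLocus_subset {M N : Type} [AddCommGroup M] [Module R M]
    [AddCommGroup N] [Module R N]
    (h : zeroLocus (Module.annihilator R M : Set R) ⊆ zeroLocus (Module.annihilator R N)) :
    mdim R M ≤ mdim R N := by
  rw [mdim_eq_krullDim_zeroLocus, mdim_eq_krullDim_zeroLocus]
  exact Order.krullDim_le_of_strictMono (Set.inclusion h) fun _ _ hab => hab

variable {M : Type} [AddCommGroup M] [Module R M]

theorem zeroLocus_annihilator_quotient_smul_top [Module.Finite R M] (I : Ideal R) :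
    zeroLocus (Module.annihilator R (M ⧸ I • (⊤ : Submodule R M)) : Set R) =
      zeroLocus (Module.annihilator R M) ∩ zeroLocus I := by
  rw [← Module.support_eq_zeroLocus, ← Module.support_eq_zeroLocus, Module.support_quotient]

theorem mdim_submodule_le_mdim_quotient_smul_top [Module.Finite R M] {I : Ideal R}
    {N : Submodule R M} (hI : I ≤ (Module.annihilator R N).radical) :
    mdim R N ≤ mdim R (M ⧸ I • (⊤ : Submodule R M)) := by
  refine mdim_le_of_zeroLocus_subset ?_
  rw [zeroLocus_annihilator_quotient_smul_top]
  refine Set.subset_inter (zeroLocus_anti_mono ?_) ?_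
  · exact N.subtype.annihilator_le_of_injective N.injective_subtype
  · rw [← zeroLocus_radical]
    exact zeroLocus_anti_mono hI

theorem mdim_torsionBy_pow_le_mdim_quotient [Module.Finite R M] (x : R) (n : ℕ) :
    mdim R (Submodule.torsionBy R M (x ^ n)) ≤
      mdim R (M ⧸ Ideal.span {x} • (⊤ : Submodule R M)) := by
  refine mdim_submodule_le_mdim_quotient_smul_top ?_
  rw [Ideal.span_singleton_le_iff_mem]
  exact ⟨n, (Module.isTorsionBy_iff_mem_annihilator _ _).mp (Submodule.torsionBy_isTorsionBy _)⟩

end Dimension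

theorem Submodule.torsionBy_inf_smul_top_eq_bot {R M : Type*} [CommRing R] [AddCommGroup M]
    [Module R M] {x : R} (h : torsionBy R M (x ^ 2) ≤ torsionBy R M x) :
    torsionBy R M x ⊓ x • ⊤ = ⊥ := by
  rw [eq_bot_iff]
  rintro _ ⟨hker, himage⟩
  obtain ⟨m, -, rfl⟩ := (mem_smul_pointwise_iff_exists _ _ _).mp himage
  have hm : m ∈ torsionBy R M (x ^ 2) := by
    rwa [mem_torsionBy_iff, sq, mul_smul]
  exact h hm

theorem parameter_element_annihilating_general (R : Type) [CommRing R]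
    (M : Type) [AddCommGroup M] [Module R M] [Module.Finite R M]
    (d : ℕ) (hd1 : 1 ≤ d) (hd : mdim R M = ((d : ℕ∞) : WithBot ℕ∞))
    (D1 : Submodule R M)
    (hD1max : ∀ N : Submodule R M, mdim R ↥N < mdim R M → N ≤ D1)
    (x : R)
    (hpar : mdim R (M ⧸ (Ideal.span {x} • (⊤ : Submodule R M))) =
      (((d - 1 : ℕ) : ℕ∞) : WithBot ℕ∞))
    (hann : ∀ y ∈ D1, x • y = 0) :
    D1 = Submodule.torsionBy R M x ∧
      Submodule.torsionBy R M x = Submodule.torsionBy R M (x ^ 2) ∧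
      D1 ⊓ (Ideal.span {x} • (⊤ : Submodule R M)) = ⊥ := by
  have hsq_lt : mdim R (Submodule.torsionBy R M (x ^ 2)) < mdim R M := by
    refine (mdim_torsionBy_pow_le_mdim_quotient x 2).trans_lt ?_
    rw [hpar, hd]
    exact_mod_cast Nat.sub_lt hd1 one_pos
  have hsq_le : Submodule.torsionBy R M (x ^ 2) ≤ D1 := hD1max _ hsq_lt
  have hD1_le : D1 ≤ Submodule.torsionBy R M x := fun y hy => hann y hy
  have hx_le_sq : Submodule.torsionBy R M x ≤ Submodule.torsionBy R M (x ^ 2) :=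
    Submodule.torsionBy_le_torsionBy_of_dvd _ _ (dvd_pow_self x two_ne_zero)
  have hD1_eq : D1 = Submodule.torsionBy R M x := hD1_le.antisymm (hx_le_sq.trans hsq_le)
  refine ⟨hD1_eq, hx_le_sq.antisymm (hsq_le.trans hD1_le), ?_⟩
  rw [Submodule.ideal_span_singleton_smul, hD1_eq]
  exact Submodule.torsionBy_inf_smul_top_eq_bot (hsq_le.trans hD1_le)

/-- The submodule computation in the proof of Lemma 3.3: if `D₁` is the largest submodule of
`M` of dimension `< d` and `x` is a parameter element of `M` annihilating `D₁`, then
`D₁ = (0 :_M x) = (0 :_M x²)` and `D₁ ∩ xM = 0`. -/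
theorem parameter_element_annihilating (R : Type) [CommRing R] [IsNoetherianRing R]
    [IsLocalRing R]
    (M : Type) [AddCommGroup M] [Module R M] [Module.Finite R M] [Nontrivial M]
    (d : ℕ) (hd1 : 1 ≤ d) (hd : mdim R M = ((d : ℕ∞) : WithBot ℕ∞))
    (D1 : Submodule R M)
    (hD1lt : mdim R ↥D1 < mdim R M)
    (hD1max : ∀ N : Submodule R M, mdim R ↥N < mdim R M → N ≤ D1)
    (x : R) (hxm : x ∈ IsLocalRing.maximalIdeal R)
    (hpar : mdim R (M ⧸ (Ideal.span {x} • (⊤ : Submodule R M))) =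
      (((d - 1 : ℕ) : ℕ∞) : WithBot ℕ∞))
    (hann : ∀ y ∈ D1, x • y = 0) :
    D1 = Submodule.torsionBy R M x ∧
      Submodule.torsionBy R M x = Submodule.torsionBy R M (x ^ 2) ∧
      D1 ⊓ (Ideal.span {x} • (⊤ : Submodule R M)) = ⊥ :=
  parameter_element_annihilating_general R M d hd1 hd D1 hD1max x hpar hann
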